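/- Fourier inversion identity with singular kernel (the computation establishing equations (3) and (4) of the paper): let t > 0, x ∈ ℝ, and let g : [0, t] → ℝ be a bounded Borel measurable function such that ∫₀ᵗ |g(t − s) − g(t)| s^{−3/2} ds < ∞. Then the function λ ↦ e^{−λ²t/2} cos(λx) + ∫₀ᵗ e^{−λ²(t−s)/2} (λ²/2) g(s) ds − g(t) is Lebesgue integrable on ℝ, and (1/(2π)) ∫_ℝ ( e^{−λ²t/2} cos(λx) + ∫₀ᵗ e^{−λ²(t−s)/2} (λ²/2) g(s) ds − g(t) ) dλ = (1/√(2πt)) e^{−x²/(2t)} + (1/(2√(2π))) ∫₀ᵗ (g(t − s) − g(t)) s^{−3/2} ds − g(t)/√(2πt). -/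

import Mathlib

/-!
Substituting `u = t - s` and using `∫₀ᵗ (λ²/2) e^{-λ²u/2} du = 1 - e^{-λ²t/2}`, the integrand
becomes `e^{-λ²t/2} (cos λx - g t) + ∫₀ᵗ (λ²/2) e^{-λ²u/2} (g (t - u) - g t) du`. The first
term is a Gaussian Fourier integral. For the second, `∫ (λ²/2) e^{-λ²u/2} dλ = √(2π)/2 · u^{-3/2}`,
so by Tonelli the hypothesis on `g` is exactly integrability on `ℝ × (0, t]`, and Fubini
produces the singular integral.
-/

open MeasureTheory Filter Real Set

noncomputable section

section GaussianFourier

open Complex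

lemma re_cexp_mul_I_mul_cexp_neg_mul_sq (a x l : ℝ) :
    (cexp (I * x * l) * cexp (-a * l ^ 2)).re = Real.exp (-a * l ^ 2) * Real.cos (l * x) := by
  have hsplit : I * x * l + -a * l ^ 2 = ((-a * l ^ 2 : ℝ) : ℂ) + ((l * x : ℝ) : ℂ) * I := by
    push_cast; ring
  rw [← Complex.exp_add, hsplit, Complex.exp_re, add_re, add_im, ofReal_re, ofReal_im,
    re_ofReal_mul, im_ofReal_mul, I_re, I_im]
  ring_nf

lemma integrable_cexp_mul_I_mul_cexp_neg_mul_sq {a : ℝ} (ha : 0 < a) (x : ℝ) :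
    Integrable fun l : ℝ => cexp (I * x * l) * cexp (-a * l ^ 2) := by
  simpa only [← Complex.exp_add, add_comm, zero_add]
    using integrable_cexp_quadratic (b := a) (by simpa using ha) (I * x) 0

lemma integrable_exp_neg_mul_sq_mul_cos {a : ℝ} (ha : 0 < a) (x : ℝ) :
    Integrable fun l : ℝ => Real.exp (-a * l ^ 2) * Real.cos (l * x) := by
  simpa only [RCLike.re_to_complex, re_cexp_mul_I_mul_cexp_neg_mul_sq]
    using (integrable_cexp_mul_I_mul_cexp_neg_mul_sq ha x).re

lemma integral_exp_neg_mul_sq_mul_cos {a : ℝ} (ha : 0 < a) (x : ℝ) :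
    ∫ l : ℝ, Real.exp (-a * l ^ 2) * Real.cos (l * x)
      = √(π / a) * Real.exp (-x ^ 2 / (4 * a)) := by
  have hsqrt : ((π : ℂ) / a) ^ (1 / 2 : ℂ) = ((√(π / a) : ℝ) : ℂ) := by
    rw [Real.sqrt_eq_rpow, ofReal_cpow (by positivity)]
    push_cast; ring_nf
  have hexp : cexp (-(x : ℂ) ^ 2 / (4 * a)) = ((Real.exp (-x ^ 2 / (4 * a)) : ℝ) : ℂ) := by
    push_cast; ring_nf
  have hre := integral_re (integrable_cexp_mul_I_mul_cexp_neg_mul_sq ha x)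
  simp only [RCLike.re_to_complex, re_cexp_mul_I_mul_cexp_neg_mul_sq] at hre
  rw [hre, fourierIntegral_gaussian (by simpa using ha), hsqrt, hexp, ← ofReal_mul, ofReal_re]

end GaussianFourier

lemma integral_sq_mul_exp_neg_mul_sq {b : ℝ} (hb : 0 < b) :
    ∫ l : ℝ, l ^ 2 * Real.exp (-b * l ^ 2) = √(π / b) / (2 * b) := by
  have hGamma : Real.Gamma ((2 + 1) / 2) = √π / 2 := by
    rw [show ((2 : ℝ) + 1) / 2 = (0 : ℕ) + 1 + 1 / 2 by norm_num, Real.Gamma_nat_add_one_add_half]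
    norm_num
  have hpow : b ^ (-((2 : ℝ) + 1) / 2) = 1 / (b * √b) := by
    rw [show -((2 : ℝ) + 1) / 2 = -(1 + 1 / 2) by norm_num, Real.rpow_neg hb.le,
      Real.rpow_add hb, Real.rpow_one, ← Real.sqrt_eq_rpow, one_div]
  calc ∫ l : ℝ, l ^ 2 * Real.exp (-b * l ^ 2)
      = 2 * ∫ l in Ioi (0 : ℝ), l ^ (2 : ℝ) * Real.exp (-b * l ^ (2 : ℝ)) := by
        rw [← integral_comp_abs (f := fun l => l ^ 2 * Real.exp (-b * l ^ 2))]
        simp only [Real.rpow_two, sq_abs]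
    _ = √(π / b) / (2 * b) := by
        rw [integral_rpow_mul_exp_neg_mul_rpow two_pos (by norm_num) hb, hGamma, hpow,
          Real.sqrt_div pi_pos.le]
        field_simp

def heatRate (l u : ℝ) : ℝ := Real.exp (-l ^ 2 * u / 2) * (l ^ 2 / 2)

lemma heatRate_nonneg (l u : ℝ) : 0 ≤ heatRate l u := by
  unfold heatRate; positivity

lemma heatRate_eq_half_mul_sq_mul_exp (l u : ℝ) :
    heatRate l u = 1 / 2 * (l ^ 2 * Real.exp (-(u / 2) * l ^ 2)) := by
  unfold heatRate; ring_nf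

lemma hasDerivAt_neg_exp_neg_sq_mul_div_two (l u : ℝ) :
    HasDerivAt (fun u => -Real.exp (-l ^ 2 * u / 2)) (heatRate l u) u := by
  refine (((hasDerivAt_id' u).const_mul (-l ^ 2)).div_const 2).exp.neg.congr_deriv ?_
  unfold heatRate; ring

lemma integral_Ioc_heatRate {t : ℝ} (ht : 0 ≤ t) (l : ℝ) :
    ∫ u in Ioc 0 t, heatRate l u = 1 - Real.exp (-l ^ 2 * t / 2) := by
  rw [← intervalIntegral.integral_of_le ht, intervalIntegral.integral_eq_sub_of_hasDerivAt
    (fun u _ => hasDerivAt_neg_exp_neg_sq_mul_div_two l u)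
    ((by unfold heatRate; fun_prop : Continuous (heatRate l)).intervalIntegrable _ _)]
  simp only [mul_zero, zero_div, Real.exp_zero]
  ring

lemma integrable_heatRate {u : ℝ} (hu : 0 < u) : Integrable fun l => heatRate l u := by
  simp_rw [heatRate_eq_half_mul_sq_mul_exp]
  refine Integrable.const_mul ?_ _
  simpa using integrable_rpow_mul_exp_neg_mul_sq (half_pos hu) (s := 2) (by norm_num)

lemma integral_heatRate {u : ℝ} (hu : 0 < u) :
    ∫ l, heatRate l u = √(2 * π) / 2 / u ^ ((3 : ℝ) / 2) := by
  have h32 : u ^ ((3 : ℝ) / 2) = u * √u := by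
    rw [show (3 : ℝ) / 2 = 1 + 1 / 2 by norm_num, Real.rpow_add hu, Real.rpow_one,
      ← Real.sqrt_eq_rpow]
  have : √u ≠ 0 := by positivity
  simp_rw [heatRate_eq_half_mul_sq_mul_exp]
  rw [integral_const_mul, integral_sq_mul_exp_neg_mul_sq (half_pos hu), h32,
    Real.sqrt_div pi_pos.le, Real.sqrt_mul zero_le_two, Real.sqrt_div hu.le]
  field_simp

section SingularKernel

variable {h : ℝ → ℝ}

lemma aestronglyMeasurable_of_integrableOn_div_rpow {s : Set ℝ} (hs : MeasurableSet s)
    (hs0 : s ⊆ Ioi 0) (r : ℝ) (hh : IntegrableOn (fun u => h u / u ^ r) s) :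
    AEStronglyMeasurable h (volume.restrict s) := by
  refine (hh.aestronglyMeasurable.mul
    (by fun_prop : Measurable fun u : ℝ => u ^ r).aestronglyMeasurable).congr ?_
  filter_upwards [ae_restrict_mem hs] with u hu
  exact div_mul_cancel₀ _ (Real.rpow_pos_of_pos (hs0 hu) r).ne'

lemma integrable_heatRate_mul_prod {s : Set ℝ} (hs : MeasurableSet s) (hs0 : s ⊆ Ioi 0)
    (hh : IntegrableOn (fun u => h u / u ^ ((3 : ℝ) / 2)) s) :
    Integrable (fun p : ℝ × ℝ => heatRate p.1 p.2 * h p.2) (volume.prod (volume.restrict s)) := by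
  have hmeas : AEStronglyMeasurable (fun p : ℝ × ℝ => heatRate p.1 p.2 * h p.2)
      (volume.prod (volume.restrict s)) :=
    (by unfold heatRate; fun_prop : Continuous fun p : ℝ × ℝ => heatRate p.1 p.2)
      |>.aestronglyMeasurable.mul
      (aestronglyMeasurable_of_integrableOn_div_rpow hs hs0 _ hh).comp_snd
  refine (integrable_prod_iff' hmeas).2 ⟨?_, ?_⟩
  · filter_upwards [ae_restrict_mem hs] with u hu
    exact (integrable_heatRate (hs0 hu)).mul_const _
  · refine (hh.norm.const_mul (√(2 * π) / 2)).congr ?_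
    filter_upwards [ae_restrict_mem hs] with u hu
    have hu0 : 0 < u ^ ((3 : ℝ) / 2) := Real.rpow_pos_of_pos (hs0 hu) _
    simp only [norm_mul, Real.norm_of_nonneg (heatRate_nonneg _ _), integral_mul_const,
      integral_heatRate (hs0 hu), norm_div, Real.norm_of_nonneg hu0.le]
    ring

lemma integral_integral_heatRate_mul {s : Set ℝ} (hs : MeasurableSet s) (hs0 : s ⊆ Ioi 0)
    (hh : IntegrableOn (fun u => h u / u ^ ((3 : ℝ) / 2)) s) :
    ∫ l, ∫ u in s, heatRate l u * h u = √(2 * π) / 2 * ∫ u in s, h u / u ^ ((3 : ℝ) / 2) := by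
  rw [integral_integral_swap (integrable_heatRate_mul_prod hs hs0 hh), ← integral_const_mul]
  refine setIntegral_congr_fun hs fun u hu => ?_
  rw [integral_mul_const, integral_heatRate (hs0 hu)]
  ring

lemma integrableOn_Ioc_heatRate_mul {t : ℝ}
    (hh : IntegrableOn (fun u => h u / u ^ ((3 : ℝ) / 2)) (Ioc 0 t)) (l : ℝ) :
    IntegrableOn (fun u => heatRate l u * h u) (Ioc 0 t) := by
  have hmeas : Measurable fun u : ℝ => heatRate l u * u ^ ((3 : ℝ) / 2) := by
    unfold heatRate; fun_prop
  refine (hh.bdd_mul (c := l ^ 2 / 2 * t ^ ((3 : ℝ) / 2)) hmeas.aestronglyMeasurable ?_).congr ?_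
  · filter_upwards [ae_restrict_mem measurableSet_Ioc] with u hu
    have hu0 : 0 < u ^ ((3 : ℝ) / 2) := Real.rpow_pos_of_pos hu.1 _
    have hexp : Real.exp (-l ^ 2 * u / 2) ≤ 1 :=
      Real.exp_le_one_iff.2 (by nlinarith [sq_nonneg l, hu.1.le])
    have hpow : u ^ ((3 : ℝ) / 2) ≤ t ^ ((3 : ℝ) / 2) :=
      Real.rpow_le_rpow hu.1.le hu.2 (by norm_num)
    rw [Real.norm_of_nonneg (mul_nonneg (heatRate_nonneg l u) hu0.le)]
    unfold heatRate
    calc Real.exp (-l ^ 2 * u / 2) * (l ^ 2 / 2) * u ^ ((3 : ℝ) / 2)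
        ≤ 1 * (l ^ 2 / 2) * t ^ ((3 : ℝ) / 2) := by gcongr
      _ = l ^ 2 / 2 * t ^ ((3 : ℝ) / 2) := by rw [one_mul]
  · filter_upwards [ae_restrict_mem measurableSet_Ioc] with u hu
    have hu0 : u ^ ((3 : ℝ) / 2) ≠ 0 := (Real.rpow_pos_of_pos hu.1 _).ne'
    field_simp

end SingularKernel

lemma setIntegral_Ioc_comp_sub_left {E : Type*} [NormedAddCommGroup E] [NormedSpace ℝ E]
    (f : ℝ → E) {t : ℝ} (ht : 0 ≤ t) :
    ∫ s in Ioc 0 t, f (t - s) = ∫ u in Ioc 0 t, f u := by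
  rw [← intervalIntegral.integral_of_le ht, ← intervalIntegral.integral_of_le ht,
    intervalIntegral.integral_comp_sub_left, sub_self, sub_zero]

lemma integral_Ioc_heatRate_sub_mul {t : ℝ} (ht : 0 ≤ t) {g : ℝ → ℝ}
    (hg : IntegrableOn (fun u => (g (t - u) - g t) / u ^ ((3 : ℝ) / 2)) (Ioc 0 t)) (l : ℝ) :
    ∫ s in Ioc 0 t, heatRate l (t - s) * g s
      = (∫ u in Ioc 0 t, heatRate l u * (g (t - u) - g t))
        + g t * (1 - Real.exp (-l ^ 2 * t / 2)) := by
  have hconst : IntegrableOn (fun u => heatRate l u * g t) (Ioc 0 t) :=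
    (by unfold heatRate; fun_prop : Continuous fun u => heatRate l u * g t).integrableOn_Ioc
  calc ∫ s in Ioc 0 t, heatRate l (t - s) * g s
      = ∫ s in Ioc 0 t, heatRate l (t - s) * g (t - (t - s)) := by simp_rw [sub_sub_cancel]
    _ = ∫ u in Ioc 0 t, (heatRate l u * (g (t - u) - g t) + heatRate l u * g t) := by
        rw [setIntegral_Ioc_comp_sub_left (fun u => heatRate l u * g (t - u)) ht]
        simp_rw [← mul_add, sub_add_cancel]
    _ = _ := by
        rw [integral_add (integrableOn_Ioc_heatRate_mul hg l) hconst, integral_mul_const,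
          integral_Ioc_heatRate ht, mul_comm]

lemma sqrt_pi_div_half_div_two_pi {t : ℝ} (ht : 0 < t) :
    √(π / (t / 2)) / (2 * π) = 1 / √(2 * π * t) := by
  rw [show π / (t / 2) = 2 * π / t by field_simp, Real.sqrt_div' _ ht.le, Real.sqrt_mul' _ ht.le]
  field_simp
  exact Real.sq_sqrt (by positivity)

lemma sqrt_two_pi_div_two_div_two_pi : √(2 * π) / 2 / (2 * π) = 1 / (2 * √(2 * π)) := by
  field_simp
  exact Real.sq_sqrt (by positivity)

theorem fourier_inversion_with_singular_kernel_general
    (t x : ℝ) (ht : 0 < t) (g : ℝ → ℝ)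
    (hint : IntegrableOn (fun s : ℝ => (g (t - s) - g t) / s ^ ((3:ℝ)/2))
      (Set.Ioc 0 t) volume) :
    Integrable
      (fun l : ℝ =>
        Real.exp (-l^2 * t / 2) * Real.cos (l * x)
          + (∫ s in Set.Ioc (0:ℝ) t, Real.exp (-l^2 * (t - s) / 2) * (l^2 / 2) * g s)
          - g t) volume ∧
    (1 / (2 * π)) *
        (∫ l : ℝ,
          (Real.exp (-l^2 * t / 2) * Real.cos (l * x)
            + (∫ s in Set.Ioc (0:ℝ) t, Real.exp (-l^2 * (t - s) / 2) * (l^2 / 2) * g s)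
            - g t))
      = (1 / Real.sqrt (2 * π * t)) * Real.exp (-x^2 / (2 * t))
        + (1 / (2 * Real.sqrt (2 * π))) *
            (∫ s in Set.Ioc (0:ℝ) t, (g (t - s) - g t) / s ^ ((3:ℝ)/2))
        - g t / Real.sqrt (2 * π * t) := by
  have hdecomp : (fun l : ℝ => Real.exp (-l ^ 2 * t / 2) * Real.cos (l * x)
        + (∫ s in Ioc 0 t, heatRate l (t - s) * g s) - g t)
      = fun l => (Real.exp (-(t / 2) * l ^ 2) * Real.cos (l * x)
          - g t * Real.exp (-(t / 2) * l ^ 2))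
        + ∫ u in Ioc 0 t, heatRate l u * (g (t - u) - g t) := by
    funext l
    rw [integral_Ioc_heatRate_sub_mul ht.le hint l, show -l ^ 2 * t / 2 = -(t / 2) * l ^ 2 by ring]
    ring
  have hcos := integrable_exp_neg_mul_sq_mul_cos (half_pos ht) x
  have hgauss := (integrable_exp_neg_mul_sq (half_pos ht)).const_mul (g t)
  have hgaussian : Integrable fun l => Real.exp (-(t / 2) * l ^ 2) * Real.cos (l * x)
      - g t * Real.exp (-(t / 2) * l ^ 2) := hcos.sub hgauss
  have hker : Integrable fun l => ∫ u in Ioc 0 t, heatRate l u * (g (t - u) - g t) :=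
    (integrable_heatRate_mul_prod measurableSet_Ioc (fun _ hu => hu.1) hint).integral_prod_left
  simp only [← heatRate.eq_1, hdecomp]
  refine ⟨hgaussian.add hker, ?_⟩
  rw [integral_add hgaussian hker, integral_sub hcos hgauss, integral_const_mul,
    integral_exp_neg_mul_sq_mul_cos (half_pos ht), integral_gaussian,
    integral_integral_heatRate_mul measurableSet_Ioc (fun _ hu => hu.1) hint,
    show 4 * (t / 2) = 2 * t by ring]
  linear_combination (Real.exp (-x ^ 2 / (2 * t)) - g t) * sqrt_pi_div_half_div_two_pi ht
    + (∫ u in Ioc 0 t, (g (t - u) - g t) / u ^ ((3 : ℝ) / 2)) * sqrt_two_pi_div_two_div_two_pi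

/-- Fourier inversion identity with singular kernel: the analytic computation
establishing equations (3) and (4) of the paper. -/
theorem fourier_inversion_with_singular_kernel
    (t x : ℝ) (ht : 0 < t) (g : ℝ → ℝ)
    (hg_meas : Measurable g)
    (hg_bdd : ∃ C : ℝ, ∀ s ∈ Set.Icc (0:ℝ) t, |g s| ≤ C)
    (hint : IntegrableOn (fun s : ℝ => (g (t - s) - g t) / s ^ ((3:ℝ)/2))
      (Set.Ioc 0 t) volume) :
    Integrable
      (fun l : ℝ =>
        Real.exp (-l^2 * t / 2) * Real.cos (l * x)
          + (∫ s in Set.Ioc (0:ℝ) t, Real.exp (-l^2 * (t - s) / 2) * (l^2 / 2) * g s)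
          - g t) volume ∧
    (1 / (2 * π)) *
        (∫ l : ℝ,
          (Real.exp (-l^2 * t / 2) * Real.cos (l * x)
            + (∫ s in Set.Ioc (0:ℝ) t, Real.exp (-l^2 * (t - s) / 2) * (l^2 / 2) * g s)
            - g t))
      = (1 / Real.sqrt (2 * π * t)) * Real.exp (-x^2 / (2 * t))
        + (1 / (2 * Real.sqrt (2 * π))) *
            (∫ s in Set.Ioc (0:ℝ) t, (g (t - s) - g t) / s ^ ((3:ℝ)/2))
        - g t / Real.sqrt (2 * π * t) :=
  fourier_inversion_with_singular_kernel_general t x ht g hint
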